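/- Let K ≥ 2 and k̃ ∈ Fin K. Let v : Fin K → ℕ → ℕ → [0,1] and β : ℕ → ℕ → ℝ with β(n,m) ≥ 0 for all n, m. Assume that for every k ≠ k̃, v_k(n,m) → 1 along the product filter, that v_{k̃}(n,m) → 0 along the product filter, and that eventually along the product filter v_{k̃}(n,m) > β(n,m). Then there exist N, M such that for all n ≥ N and m ≥ M, the conditional false non-discovery rate of the thresholding decision is exactly zero: cFNR(d̂(v(n,m), β(n,m)), v(n,m)) = 0. -/

import Mathlib

open Filter

/-!
Eventually every hypothesis is rejected: the alternatives `k ≠ k₀` have posteriors tending to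
`1`, hence eventually exceeding the posterior of `k₀`, which tends to `0` and is eventually
above `β`. With every hypothesis rejected, the numerator of the conditional FNR is an empty
sum.
-/

noncomputable def thresholdDecision {ι : Type*} (v : ι → ℝ) (β : ℝ) (k : ι) : ℝ :=
  if v k > β then 1 else 0

section FNR

variable {ι : Type*} [Fintype ι]

noncomputable def cFNR (d v : ι → ℝ) : ℝ := (∑ k, (1 - d k) * v k) / max (∑ k, (1 - d k)) 1

theorem cFNR_thresholdDecision_eq_zero_of_forall_gt {v : ι → ℝ} {β : ℝ} (h : ∀ k, β < v k) :
    cFNR (thresholdDecision v β) v = 0 := by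
  simp [cFNR, thresholdDecision, h]

end FNR

theorem eventually_forall_gt_of_tendsto {ι α : Type*} [Finite ι] {l : Filter α}
    {f : ι → α → ℝ} {g : α → ℝ} {k₀ : ι} {a b : ℝ} (hab : a < b)
    (hf : ∀ k, k ≠ k₀ → Tendsto (f k) l (nhds b)) (hf₀ : Tendsto (f k₀) l (nhds a))
    (hg : ∀ᶠ x in l, g x < f k₀ x) :
    ∀ᶠ x in l, ∀ k, g x < f k x := by
  refine eventually_all.mpr fun k => ?_
  obtain rfl | hk := eq_or_ne k k₀
  · exact hg
  · filter_upwards [hg, hf₀.eventually_lt (hf k hk) hab] with x hgx hx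
    exact hgx.trans hx

theorem cFNR_exactly_zero_under_alpha_control_general
    (K : ℕ) (k₀ : Fin K)
    (v : Fin K → ℕ → ℕ → ℝ)
    (β : ℕ → ℕ → ℝ)
    (hv1 : ∀ k : Fin K, k ≠ k₀ →
      Tendsto (fun p : ℕ × ℕ => v k p.1 p.2) (atTop ×ˢ atTop) (nhds 1))
    (hv0 : Tendsto (fun p : ℕ × ℕ => v k₀ p.1 p.2) (atTop ×ˢ atTop) (nhds 0))
    (hrej : ∀ᶠ p : ℕ × ℕ in atTop ×ˢ atTop, v k₀ p.1 p.2 > β p.1 p.2) :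
    ∃ N M : ℕ, ∀ n ≥ N, ∀ m ≥ M,
      (∑ k : Fin K, (1 - (if v k n m > β n m then (1 : ℝ) else 0)) * v k n m) /
        max (∑ k : Fin K, (1 - (if v k n m > β n m then (1 : ℝ) else 0))) 1 = 0 := by
  have hall : ∀ᶠ p : ℕ × ℕ in atTop ×ˢ atTop, ∀ k, β p.1 p.2 < v k p.1 p.2 :=
    eventually_forall_gt_of_tendsto (f := fun k (p : ℕ × ℕ) => v k p.1 p.2) one_pos hv1 hv0 hrej
  rw [prod_atTop_atTop_eq, eventually_atTop_prod_self'] at hall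
  obtain ⟨N, hN⟩ := hall
  exact ⟨N, N, fun n hn m hm => cFNR_thresholdDecision_eq_zero_of_forall_gt (hN n hn m hm)⟩

/-- Under asymptotic FDR control at level `1/K` (i.e. eventually `v k₀ > β`, so that
the best model is also rejected), the conditional FNR of the thresholding decision
is exactly zero for all sufficiently large `n` and `m`. -/
theorem cFNR_exactly_zero_under_alpha_control
    (K : ℕ) (hK : 2 ≤ K) (k₀ : Fin K)
    (v : Fin K → ℕ → ℕ → ℝ)
    (hv01 : ∀ k n m, 0 ≤ v k n m ∧ v k n m ≤ 1)
    (β : ℕ → ℕ → ℝ) (hβ0 : ∀ n m, 0 ≤ β n m)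
    (hv1 : ∀ k : Fin K, k ≠ k₀ →
      Tendsto (fun p : ℕ × ℕ => v k p.1 p.2) (atTop ×ˢ atTop) (nhds 1))
    (hv0 : Tendsto (fun p : ℕ × ℕ => v k₀ p.1 p.2) (atTop ×ˢ atTop) (nhds 0))
    (hrej : ∀ᶠ p : ℕ × ℕ in atTop ×ˢ atTop, v k₀ p.1 p.2 > β p.1 p.2) :
    ∃ N M : ℕ, ∀ n ≥ N, ∀ m ≥ M,
      (∑ k : Fin K, (1 - (if v k n m > β n m then (1 : ℝ) else 0)) * v k n m) /
        max (∑ k : Fin K, (1 - (if v k n m > β n m then (1 : ℝ) else 0))) 1 = 0 :=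
  cFNR_exactly_zero_under_alpha_control_general K k₀ v β hv1 hv0 hrej
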